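/- arXiv:2107.01888 — 11 statements merged into one kernel-verified Lean document; each statement's English description precedes it below -/
import Mathlib

section
/- For all nonzero real numbers a, b and every integer n ≥ 3: if n is odd then deg 𝓑_{a,b}^n ≤ (n²−1)/4, and if n is even then deg 𝓑_{a,b}^n ≤ n²/4 − 1 (degree as a polynomial in X, with the zero polynomial having degree 0 or −∞ by convention). -/
/-- The k-th Taylor coefficient of √(1+t) at t = 0:
`c k = (−1)^(k+1)·(2k choose k)/(4^k·(2k−1))` (note `2k−1 = −1` when `k = 0`, so `c 0 = 1`). -/
noncomputable def sqrtCoeff (k : ℕ) : ℚ :=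
  (-1) ^ (k + 1) * (Nat.choose (2 * k) k : ℚ) / (4 ^ k * (2 * (k : ℚ) - 1))

/-- The polynomial `B_k^{a,b} = Σ_{u+v+w=k} c_u c_v c_w · a^{−u} b^{−v} · (a−X)^u (b−X)^v`. -/
noncomputable def Bpoly (a b : ℝ) (k : ℕ) : Polynomial ℝ :=
  ∑ u ∈ Finset.range (k + 1), ∑ v ∈ Finset.range (k + 1 - u),
    Polynomial.C ((sqrtCoeff u : ℝ) * (sqrtCoeff v : ℝ) * (sqrtCoeff (k - u - v) : ℝ)
        * a⁻¹ ^ u * b⁻¹ ^ v) *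
      (Polynomial.C a - Polynomial.X) ^ u * (Polynomial.C b - Polynomial.X) ^ v

/-- Cayley's determinant `𝓑_{a,b}^n`: for odd `n = 2m+1` it is the determinant of the
`m×m` matrix with `(i,j)` entry `B_{i+j}` (`1 ≤ i,j ≤ m`); for even `n = 2m` it is the
determinant of the `(m−1)×(m−1)` matrix with `(i,j)` entry `B_{i+j+1}` (`1 ≤ i,j ≤ m−1`). -/
noncomputable def cayleyPoly (a b : ℝ) (n : ℕ) : Polynomial ℝ :=
  if Odd n then
    Matrix.det (Matrix.of fun i j : Fin (n / 2) => Bpoly a b (i.val + j.val + 2))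
  else
    Matrix.det (Matrix.of fun i j : Fin (n / 2 - 1) => Bpoly a b (i.val + j.val + 3))

/-! Each summand of `B_k` is a constant times `u + v ≤ k` linear factors, so `deg B_k ≤ k`.
A Cayley matrix is thus a Hankel matrix whose `(i,j)` entry has degree at most `(i + c) + j`, and
every term of the Leibniz expansion of its `m × m` determinant has degree at most
`∑ (i + c) + ∑ j = m (m + c - 1)`. For odd `n` (`m = (n-1)/2`, `c = 2`) this is `(n² - 1)/4`;
for even `n` (`m = n/2 - 1`, `c = 3`) it is `n²/4 - 1`. -/

open Polynomial

lemma natDegree_C_mul_C_sub_X_pow_mul_C_sub_X_pow_le {R : Type*} [CommRing R] (r a b : R)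
    (u v : ℕ) : (C r * (C a - X) ^ u * (C b - X) ^ v).natDegree ≤ u + v := by
  compute_degree

lemma natDegree_Bpoly_le (a b : ℝ) (k : ℕ) : (Bpoly a b k).natDegree ≤ k := by
  refine natDegree_sum_le_of_forall_le _ _ fun u hu => ?_
  refine natDegree_sum_le_of_forall_le _ _ fun v hv => ?_
  simp only [Finset.mem_range] at hu hv
  exact (natDegree_C_mul_C_sub_X_pow_mul_C_sub_X_pow_le _ _ _ _ _).trans (by omega)

lemma Matrix.natDegree_det_le_of_le_add {ι R : Type*} [Fintype ι] [DecidableEq ι] [CommRing R]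
    (M : Matrix ι ι R[X]) (d e : ι → ℕ) (h : ∀ i j, (M i j).natDegree ≤ d i + e j) :
    M.det.natDegree ≤ ∑ i, d i + ∑ j, e j := by
  rw [Matrix.det_apply]
  refine natDegree_sum_le_of_forall_le _ _ fun σ _ => ?_
  rw [Units.smul_def, zsmul_eq_mul]
  refine natDegree_mul_le.trans ?_
  rw [natDegree_intCast, zero_add]
  calc (∏ i, M (σ i) i).natDegree ≤ ∑ i, (M (σ i) i).natDegree := natDegree_prod_le _ _
    _ ≤ ∑ i, (d (σ i) + e i) := Finset.sum_le_sum fun i _ => h (σ i) i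
    _ = ∑ i, d i + ∑ j, e j := by rw [Finset.sum_add_distrib, Equiv.sum_comp σ d]

lemma Fin.sum_val_add_add_sum_val (m c : ℕ) :
    ∑ i : Fin m, ((i : ℕ) + c) + ∑ j : Fin m, (j : ℕ) = m * (m + c - 1) := by
  have htwice := Finset.sum_range_id_mul_two m
  rw [Finset.sum_add_distrib, Fin.sum_univ_eq_sum_range (fun i => i) m]
  simp only [Finset.sum_const, Finset.card_univ, Fintype.card_fin, smul_eq_mul]
  rcases m with _ | m
  · simp
  · rw [Nat.add_sub_cancel] at htwice
    rw [show m + 1 + c - 1 = m + c by omega]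
    linarith

lemma natDegree_det_hankel_le {R : Type*} [CommRing R] (p : ℕ → R[X])
    (hp : ∀ k, (p k).natDegree ≤ k) (m c : ℕ) :
    (Matrix.of fun i j : Fin m => p (i + j + c)).det.natDegree ≤ m * (m + c - 1) := by
  rw [← Fin.sum_val_add_add_sum_val]
  refine Matrix.natDegree_det_le_of_le_add _ _ _ fun i j => ?_
  rw [Matrix.of_apply]
  exact (hp _).trans (by omega)

theorem cayleyPoly_natDegree_le_general (a b : ℝ) (n : ℕ) :
    (Odd n → (cayleyPoly a b n).natDegree ≤ (n ^ 2 - 1) / 4) ∧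
    (Even n → (cayleyPoly a b n).natDegree ≤ n ^ 2 / 4 - 1) := by
  refine ⟨fun hodd => ?_, fun heven => ?_⟩
  · rw [cayleyPoly, if_pos hodd]
    obtain ⟨m, rfl⟩ := hodd
    have hsize : (2 * m + 1) / 2 = m := by omega
    have hbound : ((2 * m + 1) ^ 2 - 1) / 4 = m * (m + 2 - 1) := by
      rw [show (2 * m + 1) ^ 2 = 4 * (m * (m + 2 - 1)) + 1 by
        rw [Nat.add_sub_assoc one_le_two]; ring]
      simp
    rw [hsize, hbound]
    exact natDegree_det_hankel_le _ (natDegree_Bpoly_le a b) m 2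
  · rw [cayleyPoly, if_neg (Nat.not_odd_iff_even.mpr heven)]
    obtain ⟨m, rfl⟩ := heven
    have hsize : (m + m) / 2 - 1 = m - 1 := by omega
    have hbound : (m + m) ^ 2 / 4 - 1 = (m - 1) * (m - 1 + 3 - 1) := by
      rcases m with _ | m
      · simp
      · rw [show (m + 1 + (m + 1)) ^ 2 = 4 * (m * (m + 2) + 1) by ring]
        simp
    rw [hsize, hbound]
    exact natDegree_det_hankel_le _ (natDegree_Bpoly_le a b) (m - 1) 3

/-- Degree bound for Cayley's determinant: `deg 𝓑_{a,b}^n ≤ (n²−1)/4` for odd `n` and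
`deg 𝓑_{a,b}^n ≤ n²/4 − 1` for even `n` (Proposition 2.21). -/
theorem cayleyPoly_natDegree_le (a b : ℝ) (ha : a ≠ 0) (hb : b ≠ 0) (n : ℕ) (hn : 3 ≤ n) :
    (Odd n → (cayleyPoly a b n).natDegree ≤ (n ^ 2 - 1) / 4) ∧
    (Even n → (cayleyPoly a b n).natDegree ≤ n ^ 2 / 4 - 1) :=
  cayleyPoly_natDegree_le_general a b n
end

section
/- For every integer n ≥ 3 there exists a finite set R' ⊂ ℝ such that for all nonzero real numbers a, b with a/b ∉ R', neither a nor b is a root of 𝓑_{a,b}^n, i.e. 𝓑_{a,b}^n(a) ≠ 0 and 𝓑_{a,b}^n(b) ≠ 0. -/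
/-!
At `X = a` every term of `B_k^{a,b}` with `u > 0` vanishes, so `B_k^{a,b}(a) = F_k(1 - a/b)` where
`F_k(t) = ∑_v c_v c_{k-v} t^v`; symmetrically `B_k^{a,b}(b) = F_k(1 - b/a)`. Hence
`𝓑^n_{a,b}(a) = P_n(1 - a/b)` and `𝓑^n_{a,b}(b) = P_n(1 - b/a)` for one polynomial `P_n`, the
Hankel determinant of the `F_k`, and `R'` comes from the finitely many roots of `P_n` once
`P_n ≠ 0`. Since `F_k(0) = c_k` and `c_{k+1} = (-1/4)^k C_k / 2` with `C_k` the Catalan numbers,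
`P_n(0)` is, up to nonzero factors, a Hankel determinant of Catalan numbers. That determinant is
positive: it is the Gram determinant of linearly independent vectors of ballot numbers.
-/

open Finset Polynomial

/-- `ballot m j` counts the paths of `m` steps `±1` from height `0` to height `j` that never go
below `0`. -/
def ballot : ℕ → ℕ → ℕ
  | 0, 0 => 1
  | 0, _ + 1 => 0
  | m + 1, 0 => ballot m 1
  | m + 1, j + 1 => ballot m j + ballot m (j + 2)

theorem ballot_eq_zero_of_lt : ∀ {m j : ℕ}, m < j → ballot m j = 0
  | 0, _ + 1, _ => rfl
  | m + 1, j + 1, h => by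
    rw [ballot, ballot_eq_zero_of_lt (by omega), ballot_eq_zero_of_lt (by omega)]

theorem ballot_self : ∀ m : ℕ, ballot m m = 1
  | 0 => rfl
  | m + 1 => by rw [ballot, ballot_self m, ballot_eq_zero_of_lt (by omega)]

theorem ballot_add_choose : ∀ {m j k : ℕ}, j + 2 * k = m →
    ballot m j + m.choose (j + k + 1) = m.choose k
  | 0, 0, 0, _ => rfl
  | 0, _ + 1, _, h | 0, _, _ + 1, h => by omega
  | m + 1, 0, k + 1, h => by
    have ih := ballot_add_choose (m := m) (j := 1) (k := k) (by omega)
    rw [ballot, zero_add, Nat.choose_succ_succ', Nat.choose_succ_succ']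
    rw [show 1 + k + 1 = k + 1 + 1 by omega] at ih
    omega
  | m + 1, j + 1, 0, h => by
    obtain rfl : j = m := by omega
    rw [ballot_self, Nat.choose_eq_zero_of_lt (by omega), Nat.choose_zero_right]
  | m + 1, j + 1, k + 1, h => by
    have ih₁ := ballot_add_choose (m := m) (j := j) (k := k + 1) (by omega)
    have ih₂ := ballot_add_choose (m := m) (j := j + 2) (k := k) (by omega)
    rw [ballot, show j + 1 + (k + 1) + 1 = (j + k + 2) + 1 by omega, Nat.choose_succ_succ',
      Nat.choose_succ_succ']
    rw [show j + 2 + k + 1 = j + k + 2 + 1 by omega] at ih₂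
    rw [show j + (k + 1) + 1 = j + k + 2 by omega] at ih₁
    omega

theorem ballot_two_mul_zero (n : ℕ) : ballot (2 * n) 0 = catalan n := by
  have hsum := ballot_add_choose (m := 2 * n) (j := 0) (k := n) (by omega)
  have hchoose := Nat.choose_succ_right_eq (2 * n) n
  have hcat := succ_mul_catalan_eq_centralBinom n
  rw [Nat.centralBinom] at hcat
  rw [zero_add] at hsum
  rw [show 2 * n - n = n by omega] at hchoose
  apply Nat.eq_of_mul_eq_mul_left n.succ_pos
  rw [hcat]
  nlinarith

theorem sum_ballot_succ_mul {m N : ℕ} (m' : ℕ) (hm : m ≤ N + 1) :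
    ∑ k ∈ range (N + 2), ballot (m + 1) k * ballot m' k =
      ∑ k ∈ range (N + 1), (ballot m k * ballot m' (k + 1) + ballot m (k + 1) * ballot m' k) := by
  have hlast : ballot m (N + 2) = 0 := ballot_eq_zero_of_lt (by omega)
  rw [sum_range_succ', sum_add_distrib]
  simp only [ballot, add_mul, sum_add_distrib]
  rw [sum_range_succ (fun k => ballot m (k + 2) * ballot m' (k + 1)),
    sum_range_succ' (fun k => ballot m (k + 1) * ballot m' k), hlast]
  ring

theorem sum_ballot_succ_mul_comm {m m' N : ℕ} (hm : m ≤ N + 1) (hm' : m' ≤ N + 1) :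
    ∑ k ∈ range (N + 2), ballot (m + 1) k * ballot m' k =
      ∑ k ∈ range (N + 2), ballot m k * ballot (m' + 1) k := by
  simp_rw [sum_ballot_succ_mul m' hm, mul_comm (ballot m _), sum_ballot_succ_mul m hm', add_comm]

theorem sum_ballot_mul_ballot : ∀ (m : ℕ) {m' N : ℕ}, m + m' ≤ N →
    ∑ k ∈ range (N + 1), ballot m k * ballot m' k = ballot (m + m') 0
  | 0, m', N, _ => by
    rw [sum_eq_single_of_mem 0 (by simp), zero_add]
    · simp [ballot]
    · rintro (_ | k) _ hk
      · contradiction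
      · simp [ballot]
  | m + 1, m', N + 1, h => by
    rw [sum_ballot_succ_mul_comm (by omega) (by omega), sum_ballot_mul_ballot m (by omega),
      Nat.succ_add_eq_add_succ]
  | _ + 1, _, 0, h => by omega

open Matrix in
/-- The Hankel matrix is `A * Aᵀ` with `A i k = ballot (2 * i + o) k`, and `A` has full row rank
because `ballot (2 * i + o)` vanishes beyond its pivot `ballot (2 * i + o) (2 * i + o) = 1`. -/
theorem det_hankel_catalan_pos (n o : ℕ) :
    0 < (of fun i j : Fin n => (catalan (i + j + o) : ℝ)).det := by
  let A : Matrix (Fin n) (Fin (4 * n + 2 * o + 1)) ℝ := of fun i k => ballot (2 * i + o) k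
  have hgram : (of fun i j : Fin n => (catalan (i + j + o) : ℝ)) = A * Aᴴ := by
    ext i j
    simp only [conjTranspose_eq_transpose_of_trivial, mul_apply, transpose_apply, A, of_apply]
    rw [Fin.sum_univ_eq_sum_range (fun k => (ballot (2 * i + o) k : ℝ) * ballot (2 * j + o) k),
      ← ballot_two_mul_zero, show 2 * (i + j + o) = (2 * i + o) + (2 * j + o) by ring,
      ← sum_ballot_mul_ballot _ (N := 4 * n + 2 * o) (by omega)]
    push_cast
    rfl
  let pivot : Fin n → Fin (4 * n + 2 * o + 1) := fun i => ⟨2 * i + o, by omega⟩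
  have hpivot : IsUnit (A.submatrix id pivot) := by
    have hlower : (A.submatrix id pivot).IsLowerTriangular := fun i j (hij : i < j) => by
      simp [A, pivot, ballot_eq_zero_of_lt (show 2 * i.val + o < 2 * j + o by omega)]
    rw [isUnit_iff_isUnit_det, det_of_isLowerTriangular _ hlower]
    simp [A, pivot, ballot_self]
  have hinj : Function.Injective A.vecMul := fun v w hvw =>
    vecMul_injective_iff_isUnit.2 hpivot (congrArg (· ∘ pivot) hvw)
  rw [hgram]
  exact (PosDef.mul_conjTranspose_self A hinj).det_pos

theorem sqrtCoeff_zero : sqrtCoeff 0 = 1 := by norm_num [sqrtCoeff]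

theorem sqrtCoeff_succ (n : ℕ) : sqrtCoeff (n + 1) = (-4)⁻¹ ^ n * catalan n / 2 := by
  have hcentral :
      ((n + 1 : ℕ) : ℚ) * (n + 1).centralBinom = 2 * (2 * n + 1) * n.centralBinom := by
    exact_mod_cast Nat.succ_mul_centralBinom_succ n
  have hcat : ((n + 1 : ℕ) : ℚ) * catalan n = n.centralBinom := by
    exact_mod_cast succ_mul_catalan_eq_centralBinom n
  have hchoose : ((2 * (n + 1)).choose (n + 1) : ℚ) = 2 * (2 * n + 1) * catalan n := by
    apply mul_left_cancel₀ (show ((n + 1 : ℕ) : ℚ) ≠ 0 by positivity)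
    rw [← Nat.centralBinom_eq_two_mul_choose, hcentral, ← hcat]
    ring
  have hodd : (2 * ((n + 1 : ℕ) : ℚ) - 1) = 2 * n + 1 := by push_cast; ring
  rw [sqrtCoeff, hchoose, hodd, inv_neg, neg_pow (4 : ℚ)⁻¹, inv_pow]
  field_simp
  ring

open Matrix in
theorem det_hankel_sqrtCoeff_ne_zero (n o : ℕ) :
    (of fun i j : Fin n => (sqrtCoeff (i + j + o + 1) : ℝ)).det ≠ 0 := by
  let x : ℝ := (-4)⁻¹
  have hsplit : (of fun i j : Fin n => (sqrtCoeff (i + j + o + 1) : ℝ)) =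
      of fun i j : Fin n => x ^ (i : ℕ) * (of fun k l : Fin n => x ^ (l : ℕ) *
        ((x ^ o / 2) • (of fun p q : Fin n => (catalan (p + q + o) : ℝ))) k l) i j := by
    ext i j
    simp only [sqrtCoeff_succ, of_apply, Matrix.smul_apply, smul_eq_mul, x]
    push_cast
    ring
  rw [hsplit, det_mul_column, det_mul_row, det_smul]
  have hx : x ≠ 0 := by norm_num [x]
  exact mul_ne_zero (prod_ne_zero_iff.2 fun _ _ => pow_ne_zero _ hx) <|
    mul_ne_zero (prod_ne_zero_iff.2 fun _ _ => pow_ne_zero _ hx) <|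
      mul_ne_zero (pow_ne_zero _ (by positivity)) (det_hankel_catalan_pos n o).ne'

/-- The coefficient of `s ^ k` in `√(1 + s) * √(1 + X s)`. -/
noncomputable def sqrtCoeffConv (k : ℕ) : ℝ[X] :=
  ∑ v ∈ range (k + 1), C ((sqrtCoeff v : ℝ) * sqrtCoeff (k - v)) * X ^ v

theorem eval_sqrtCoeffConv (k : ℕ) (t : ℝ) :
    (sqrtCoeffConv k).eval t =
      ∑ v ∈ range (k + 1), (sqrtCoeff v : ℝ) * sqrtCoeff (k - v) * t ^ v := by
  simp [sqrtCoeffConv, eval_finsetSum]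

theorem eval_sqrtCoeffConv_zero (k : ℕ) : (sqrtCoeffConv k).eval 0 = sqrtCoeff k := by
  rw [eval_sqrtCoeffConv, sum_eq_single_of_mem 0 (by simp)]
  · simp [sqrtCoeff_zero]
  · intro v _ hv
    simp [hv]

theorem eval_Bpoly_left (a : ℝ) {b : ℝ} (hb : b ≠ 0) (k : ℕ) :
    (Bpoly a b k).eval a = (sqrtCoeffConv k).eval (1 - a / b) := by
  have hratio : 1 - a / b = b⁻¹ * (b - a) := by field_simp
  rw [Bpoly, eval_finsetSum, sum_eq_single_of_mem 0 (by simp), eval_sqrtCoeffConv, hratio]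
  · simp [eval_finsetSum, sqrtCoeff_zero, mul_pow, mul_assoc]
  · intro u _ hu
    simp [eval_finsetSum, hu]

theorem eval_Bpoly_right {a : ℝ} (ha : a ≠ 0) (b : ℝ) (k : ℕ) :
    (Bpoly a b k).eval b = (sqrtCoeffConv k).eval (1 - b / a) := by
  have hratio : 1 - b / a = a⁻¹ * (a - b) := by field_simp
  rw [Bpoly, eval_finsetSum, eval_sqrtCoeffConv, hratio]
  refine sum_congr rfl fun u hu => ?_
  rw [eval_finsetSum, sum_eq_single_of_mem 0 (by simp at hu ⊢; omega)]
  · simp [sqrtCoeff_zero, mul_pow, mul_assoc]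
  · intro v _ hv
    simp [hv]

noncomputable def cayleyDet {R : Type*} [CommRing R] (f : ℕ → R) (n : ℕ) : R :=
  if Odd n then (Matrix.of fun i j : Fin (n / 2) => f (i + j + 2)).det
  else (Matrix.of fun i j : Fin (n / 2 - 1) => f (i + j + 3)).det

theorem cayleyPoly_eq_cayleyDet (a b : ℝ) (n : ℕ) : cayleyPoly a b n = cayleyDet (Bpoly a b) n :=
  rfl

theorem RingHom.map_cayleyDet {R S : Type*} [CommRing R] [CommRing S] (φ : R →+* S)
    (f : ℕ → R) (n : ℕ) : φ (cayleyDet f n) = cayleyDet (φ ∘ f) n := by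
  unfold cayleyDet
  split_ifs <;> rw [RingHom.map_det] <;> rfl

theorem eval_cayleyDet (f : ℕ → ℝ[X]) (n : ℕ) (x : ℝ) :
    (cayleyDet f n).eval x = cayleyDet (fun k => (f k).eval x) n :=
  (evalRingHom x).map_cayleyDet f n

theorem cayleyDet_sqrtCoeff_ne_zero (n : ℕ) : cayleyDet (fun k => (sqrtCoeff k : ℝ)) n ≠ 0 := by
  unfold cayleyDet
  split_ifs
  · exact det_hankel_sqrtCoeff_ne_zero _ 1
  · exact det_hankel_sqrtCoeff_ne_zero _ 2

theorem cayleyDet_sqrtCoeffConv_ne_zero (n : ℕ) : cayleyDet sqrtCoeffConv n ≠ 0 := fun h => by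
  have := congrArg (eval 0) h
  simp only [eval_cayleyDet, eval_sqrtCoeffConv_zero, eval_zero] at this
  exact cayleyDet_sqrtCoeff_ne_zero n this

theorem eval_cayleyPoly_left (a : ℝ) {b : ℝ} (hb : b ≠ 0) (n : ℕ) :
    (cayleyPoly a b n).eval a = (cayleyDet sqrtCoeffConv n).eval (1 - a / b) := by
  simp only [cayleyPoly_eq_cayleyDet, eval_cayleyDet, eval_Bpoly_left a hb]

theorem eval_cayleyPoly_right {a : ℝ} (ha : a ≠ 0) (b : ℝ) (n : ℕ) :
    (cayleyPoly a b n).eval b = (cayleyDet sqrtCoeffConv n).eval (1 - b / a) := by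
  simp only [cayleyPoly_eq_cayleyDet, eval_cayleyDet, eval_Bpoly_right ha b]

theorem cayleyPoly_a_b_not_roots_generic_general (n : ℕ) :
    ∃ R' : Finset ℝ, ∀ a b : ℝ, a ≠ 0 → b ≠ 0 → a / b ∉ R' →
      (cayleyPoly a b n).eval a ≠ 0 ∧ (cayleyPoly a b n).eval b ≠ 0 := by
  set P := cayleyDet sqrtCoeffConv n
  have hP : P ≠ 0 := cayleyDet_sqrtCoeffConv_ne_zero n
  refine ⟨P.roots.toFinset.image (1 - ·) ∪ P.roots.toFinset.image (fun r => (1 - r)⁻¹), ?_⟩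
  intro a b ha hb hR
  rw [eval_cayleyPoly_left a hb, eval_cayleyPoly_right ha b]
  refine ⟨fun hroot => hR (mem_union_left _ (mem_image.2 ⟨1 - a / b, ?_, sub_sub_cancel _ _⟩)),
    fun hroot => hR (mem_union_right _ (mem_image.2 ⟨1 - b / a, ?_, ?_⟩))⟩
  · exact Multiset.mem_toFinset.2 ((mem_roots hP).2 hroot)
  · exact Multiset.mem_toFinset.2 ((mem_roots hP).2 hroot)
  · rw [sub_sub_cancel, inv_div]

/-- Proposition 2.23: for each `n ≥ 3` there is a finite set `R' ⊂ ℝ` such that whenever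
`a, b ≠ 0` and `a/b ∉ R'`, neither `a` nor `b` is a root of `𝓑_{a,b}^n`. -/
theorem cayleyPoly_a_b_not_roots_generic (n : ℕ) (hn : 3 ≤ n) :
    ∃ R' : Finset ℝ, ∀ a b : ℝ, a ≠ 0 → b ≠ 0 → a / b ∉ R' →
      (cayleyPoly a b n).eval a ≠ 0 ∧ (cayleyPoly a b n).eval b ≠ 0 :=
  cayleyPoly_a_b_not_roots_generic_general n
end

section
/- Let a, b ∈ ℝ with a > 0, b > 0 and a ≠ b, and set λ_± = −(ab/(a−b)²)·(a + b ± 2√(a² − ab + b²)). Then a² − ab + b² > 0; λ₊ and λ₋ are distinct real numbers and are exactly the two roots of the quadratic (a−b)²X² + 2ab(a+b)X − 3a²b²; and the inequalities a − λ₊ > a > a − λ₋ > 0 and b − λ₊ > b > b − λ₋ > 0 hold. (Hence the two confocal 3-caustics C_{λ±} of the ellipse C₀ : x²/a + y²/b = 1 are ellipses, with C_{λ₋} nested inside C₀ and C₀ nested inside C_{λ₊}.) -/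
/-!
Since `4 (a² − ab + b²) = (a + b)² + 3 (a − b)²`, the square root exceeds `|a + b| / 2`, so
`λ₊ < 0 < λ₋`, and the Cayley polynomial factors as `(a − b)² (X − λ₊)(X − λ₋)`. Its values at
`a` and `b` are `a⁴ > 0` and `b⁴ > 0`, which puts `λ₋` below both `a` and `b`.
-/

namespace ThreeCaustics

variable {a b : ℝ}

def cayleyPoly (a b x : ℝ) : ℝ :=
  (a - b) ^ 2 * x ^ 2 + 2 * a * b * (a + b) * x - 3 * a ^ 2 * b ^ 2

noncomputable def cayleyRootPlus (a b : ℝ) : ℝ :=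
  -(a * b / (a - b) ^ 2) * (a + b + 2 * √(a ^ 2 - a * b + b ^ 2))

noncomputable def cayleyRootMinus (a b : ℝ) : ℝ :=
  -(a * b / (a - b) ^ 2) * (a + b - 2 * √(a ^ 2 - a * b + b ^ 2))

lemma cayleyPoly_self_left (a b : ℝ) : cayleyPoly a b a = a ^ 4 := by
  unfold cayleyPoly; ring

lemma cayleyPoly_self_right (a b : ℝ) : cayleyPoly a b b = b ^ 4 := by
  unfold cayleyPoly; ring

lemma four_mul_sq_sub_mul_add_sq (a b : ℝ) :
    4 * (a ^ 2 - a * b + b ^ 2) = (a + b) ^ 2 + 3 * (a - b) ^ 2 := by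
  ring

lemma sq_sub_mul_add_sq_pos (hab : a ≠ b) : 0 < a ^ 2 - a * b + b ^ 2 := by
  have := sq_pos_of_ne_zero (sub_ne_zero.2 hab)
  linarith [four_mul_sq_sub_mul_add_sq a b, sq_nonneg (a + b)]

lemma abs_add_lt_two_mul_sqrt (hab : a ≠ b) : |a + b| < 2 * √(a ^ 2 - a * b + b ^ 2) := by
  have hsq : (2 * √(a ^ 2 - a * b + b ^ 2)) ^ 2 = 4 * (a ^ 2 - a * b + b ^ 2) := by
    rw [mul_pow, Real.sq_sqrt (sq_sub_mul_add_sq_pos hab).le]; norm_num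
  apply abs_lt_of_sq_lt_sq _ (by positivity)
  rw [hsq, four_mul_sq_sub_mul_add_sq]
  have := sq_pos_of_ne_zero (sub_ne_zero.2 hab)
  linarith

lemma cayleyRootPlus_neg (hab0 : 0 < a * b) (hab : a ≠ b) : cayleyRootPlus a b < 0 := by
  have hc : 0 < a * b / (a - b) ^ 2 := div_pos hab0 (sq_pos_of_ne_zero (sub_ne_zero.2 hab))
  have hs : 0 < a + b + 2 * √(a ^ 2 - a * b + b ^ 2) := by
    linarith [abs_add_lt_two_mul_sqrt hab, neg_abs_le (a + b)]
  exact mul_neg_of_neg_of_pos (neg_neg_of_pos hc) hs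

lemma cayleyRootMinus_pos (hab0 : 0 < a * b) (hab : a ≠ b) : 0 < cayleyRootMinus a b := by
  have hc : 0 < a * b / (a - b) ^ 2 := div_pos hab0 (sq_pos_of_ne_zero (sub_ne_zero.2 hab))
  have hs : a + b - 2 * √(a ^ 2 - a * b + b ^ 2) < 0 := by
    linarith [abs_add_lt_two_mul_sqrt hab, le_abs_self (a + b)]
  exact mul_pos_of_neg_of_neg (neg_neg_of_pos hc) hs

lemma cayleyPoly_eq_mul (hab : a ≠ b) (x : ℝ) :
    cayleyPoly a b x = (a - b) ^ 2 * (x - cayleyRootPlus a b) * (x - cayleyRootMinus a b) := by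
  have hd : (a - b) ^ 2 ≠ 0 := pow_ne_zero 2 (sub_ne_zero.2 hab)
  have hs := Real.sq_sqrt (sq_sub_mul_add_sq_pos hab).le
  unfold cayleyPoly cayleyRootPlus cayleyRootMinus
  generalize √(a ^ 2 - a * b + b ^ 2) = s at hs ⊢
  field_simp
  linear_combination (4 * a ^ 2 * b ^ 2) * hs

lemma cayleyPoly_eq_zero_iff (hab : a ≠ b) (x : ℝ) :
    cayleyPoly a b x = 0 ↔ x = cayleyRootPlus a b ∨ x = cayleyRootMinus a b := by
  simp [cayleyPoly_eq_mul hab, sub_eq_zero, sub_ne_zero.2 hab, mul_assoc]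

lemma cayleyRootMinus_lt_of_cayleyPoly_pos (hab : a ≠ b) {t : ℝ} (ht : cayleyRootPlus a b < t)
    (hq : 0 < cayleyPoly a b t) : cayleyRootMinus a b < t := by
  rw [cayleyPoly_eq_mul hab] at hq
  have : 0 < (a - b) ^ 2 * (t - cayleyRootPlus a b) :=
    mul_pos (sq_pos_of_ne_zero (sub_ne_zero.2 hab)) (sub_pos.2 ht)
  exact sub_pos.1 (pos_of_mul_pos_right hq this.le)

end ThreeCaustics

open ThreeCaustics in
/-- The ellipse case of Proposition 2.27: for `a, b > 0`, `a ≠ b`, the two roots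
`λ± = −(ab/(a−b)²)(a + b ± 2√(a² − ab + b²))` of the normalized Cayley polynomial
`(a−b)²X² + 2ab(a+b)X − 3a²b²` are real and distinct, and satisfy
`a − λ₊ > a > a − λ₋ > 0` and `b − λ₊ > b > b − λ₋ > 0`, so the two confocal
3-caustics are ellipses, one nested inside `C₀` and the other containing it. -/
theorem three_caustics_of_ellipse (a b : ℝ) (ha : 0 < a) (hb : 0 < b) (hab : a ≠ b) :
    let lp : ℝ := -(a * b / (a - b) ^ 2) * (a + b + 2 * Real.sqrt (a ^ 2 - a * b + b ^ 2))
    let lm : ℝ := -(a * b / (a - b) ^ 2) * (a + b - 2 * Real.sqrt (a ^ 2 - a * b + b ^ 2))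
    0 < a ^ 2 - a * b + b ^ 2 ∧
    lp ≠ lm ∧
    (∀ x : ℝ, (a - b) ^ 2 * x ^ 2 + 2 * a * b * (a + b) * x - 3 * a ^ 2 * b ^ 2 = 0 ↔
      x = lp ∨ x = lm) ∧
    (a - lp > a ∧ a > a - lm ∧ a - lm > 0) ∧
    (b - lp > b ∧ b > b - lm ∧ b - lm > 0) := by
  intro lp lm
  have hlp : lp < 0 := cayleyRootPlus_neg (mul_pos ha hb) hab
  have hlm : 0 < lm := cayleyRootMinus_pos (mul_pos ha hb) hab
  have hlma : lm < a := cayleyRootMinus_lt_of_cayleyPoly_pos hab (hlp.trans ha)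
    (by rw [cayleyPoly_self_left]; positivity)
  have hlmb : lm < b := cayleyRootMinus_lt_of_cayleyPoly_pos hab (hlp.trans hb)
    (by rw [cayleyPoly_self_right]; positivity)
  refine ⟨sq_sub_mul_add_sq_pos hab, (hlp.trans hlm).ne, cayleyPoly_eq_zero_iff hab,
    ⟨?_, ?_, ?_⟩, ⟨?_, ?_, ?_⟩⟩ <;> linarith
end

section
/- Let a, b ∈ ℝ with a > 0 > b (so a ≠ b), and set λ_± = −(ab/(a−b)²)·(a + b ± 2√(a² − ab + b²)). Then a² − ab + b² > 0; λ₊ and λ₋ are distinct real numbers and are exactly the two roots of the quadratic (a−b)²X² + 2ab(a+b)X − 3a²b²; and the inequalities a − λ₋ > a > a − λ₊ > 0 and 0 > b − λ₋ > b > b − λ₊ hold. (Hence the two confocal 3-caustics C_{λ±} of the hyperbola C₀ : x²/a + y²/b = 1 are hyperbolas.) -/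
/-!
Write `s = √(a² − ab + b²)`. The discriminant of the Cayley quadratic is `(4abs)²`, which gives
the two roots `λ± = −ab(a + b ± 2s)/(a − b)²`. Everything else follows from the identities
`4s² − (a + b)² = 3(a − b)²`, `(a − b)²(a − λ₊) = a(s + b)²` and `(a − b)²(λ₋ − b) = −b(s − a)²`.
-/

namespace ConfocalCaustic

-- The paper's `λ±`, with `√(a² − ab + b²)` abstracted to any `s` with `s² = a² − ab + b²`.
noncomputable def lambdaPlus (a b s : ℝ) : ℝ := -(a * b / (a - b) ^ 2) * (a + b + 2 * s)

noncomputable def lambdaMinus (a b s : ℝ) : ℝ := -(a * b / (a - b) ^ 2) * (a + b - 2 * s)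

variable {a b s : ℝ}

theorem sq_sub_mul_add_sq_pos (ha : a ≠ 0) : 0 < a ^ 2 - a * b + b ^ 2 := by
  nlinarith [sq_nonneg (a - b), sq_nonneg b, sq_pos_of_ne_zero ha]

theorem cayley_eq_zero_iff (hab : a ≠ b) (hs : s ^ 2 = a ^ 2 - a * b + b ^ 2) (x : ℝ) :
    (a - b) ^ 2 * x ^ 2 + 2 * a * b * (a + b) * x - 3 * a ^ 2 * b ^ 2 = 0 ↔
      x = lambdaPlus a b s ∨ x = lambdaMinus a b s := by
  have hd : (a - b) ^ 2 ≠ 0 := pow_ne_zero 2 (sub_ne_zero.2 hab)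
  have hdiscrim : discrim ((a - b) ^ 2) (2 * a * b * (a + b)) (-3 * a ^ 2 * b ^ 2) =
      (-4 * a * b * s) * (-4 * a * b * s) := by
    rw [discrim]; linear_combination (-16 * a ^ 2 * b ^ 2) * hs
  have hroots := quadratic_eq_zero_iff hd hdiscrim x
  have hplus : (-(2 * a * b * (a + b)) + -4 * a * b * s) / (2 * (a - b) ^ 2) =
      lambdaPlus a b s := by
    rw [lambdaPlus]; field_simp; ring
  have hminus : (-(2 * a * b * (a + b)) - -4 * a * b * s) / (2 * (a - b) ^ 2) =
      lambdaMinus a b s := by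
    rw [lambdaMinus]; field_simp; ring
  rw [hplus, hminus] at hroots
  rw [← hroots]
  constructor <;> intro h <;> linear_combination h

theorem abs_add_lt_two_mul (hab : a ≠ b) (hs : s ^ 2 = a ^ 2 - a * b + b ^ 2) (hs0 : 0 ≤ s) :
    |a + b| < 2 * s := by
  refine abs_lt_of_sq_lt_sq ?_ (by positivity)
  nlinarith [sq_pos_of_ne_zero (sub_ne_zero.2 hab)]

theorem sub_lambdaPlus (hab : a ≠ b) (hs : s ^ 2 = a ^ 2 - a * b + b ^ 2) :
    a - lambdaPlus a b s = a * (s + b) ^ 2 / (a - b) ^ 2 := by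
  have hd : (a - b) ^ 2 ≠ 0 := pow_ne_zero 2 (sub_ne_zero.2 hab)
  rw [lambdaPlus]; field_simp; linear_combination (-a) * hs

theorem lambdaMinus_sub (hab : a ≠ b) (hs : s ^ 2 = a ^ 2 - a * b + b ^ 2) :
    lambdaMinus a b s - b = -b * (s - a) ^ 2 / (a - b) ^ 2 := by
  have hd : (a - b) ^ 2 ≠ 0 := pow_ne_zero 2 (sub_ne_zero.2 hab)
  rw [lambdaMinus]; field_simp; linear_combination b * hs

theorem lambdaPlus_lt (ha : 0 < a) (hab : a ≠ b) (hs : s ^ 2 = a ^ 2 - a * b + b ^ 2) :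
    lambdaPlus a b s < a := by
  have hsb : s + b ≠ 0 := by
    intro h
    have : a * (a - b) = 0 := by linear_combination (s - b) * h - hs
    rcases mul_eq_zero.1 this with h | h
    exacts [ha.ne' h, hab (sub_eq_zero.1 h)]
  have hab' := sub_ne_zero.2 hab
  rw [← sub_pos, sub_lambdaPlus hab hs]
  positivity

theorem lt_lambdaMinus (hb : b < 0) (hab : a ≠ b) (hs : s ^ 2 = a ^ 2 - a * b + b ^ 2) :
    b < lambdaMinus a b s := by
  have hsa : s - a ≠ 0 := by
    intro h
    have : b * (b - a) = 0 := by linear_combination (s + a) * h - hs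
    rcases mul_eq_zero.1 this with h | h
    exacts [hb.ne h, hab (sub_eq_zero.1 h).symm]
  have hab' := sub_ne_zero.2 hab
  have hb' : 0 < -b := neg_pos.2 hb
  rw [← sub_pos, lambdaMinus_sub hab hs]
  positivity

end ConfocalCaustic

open ConfocalCaustic in
/-- The hyperbola case of Proposition 2.27: for `a > 0 > b`, the two roots
`λ± = −(ab/(a−b)²)(a + b ± 2√(a² − ab + b²))` of the normalized Cayley polynomial
`(a−b)²X² + 2ab(a+b)X − 3a²b²` are real and distinct, and satisfy
`a − λ₋ > a > a − λ₊ > 0` and `0 > b − λ₋ > b > b − λ₊`, so the two confocal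
3-caustics are hyperbolas. -/
theorem three_caustics_of_hyperbola (a b : ℝ) (ha : 0 < a) (hb : b < 0) :
    let lp : ℝ := -(a * b / (a - b) ^ 2) * (a + b + 2 * Real.sqrt (a ^ 2 - a * b + b ^ 2))
    let lm : ℝ := -(a * b / (a - b) ^ 2) * (a + b - 2 * Real.sqrt (a ^ 2 - a * b + b ^ 2))
    0 < a ^ 2 - a * b + b ^ 2 ∧
    lp ≠ lm ∧
    (∀ x : ℝ, (a - b) ^ 2 * x ^ 2 + 2 * a * b * (a + b) * x - 3 * a ^ 2 * b ^ 2 = 0 ↔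
      x = lp ∨ x = lm) ∧
    (a - lm > a ∧ a > a - lp ∧ a - lp > 0) ∧
    (0 > b - lm ∧ b - lm > b ∧ b > b - lp) := by
  have hab : a ≠ b := (hb.trans ha).ne'
  have hpos := sq_sub_mul_add_sq_pos (b := b) ha.ne'
  set s := Real.sqrt (a ^ 2 - a * b + b ^ 2)
  have hs : s ^ 2 = a ^ 2 - a * b + b ^ 2 := Real.sq_sqrt hpos.le
  have hs0 : 0 < s := Real.sqrt_pos.2 hpos
  have hc : 0 < -(a * b / (a - b) ^ 2) :=
    neg_pos.2 (div_neg_of_neg_of_pos (mul_neg_of_pos_of_neg ha hb) (by positivity))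
  obtain ⟨hlow, hup⟩ := abs_lt.1 (abs_add_lt_two_mul hab hs hs0.le)
  have hlp : 0 < lambdaPlus a b s := mul_pos hc (by linarith)
  have hlm : lambdaMinus a b s < 0 := mul_neg_of_pos_of_neg hc (by linarith)
  have hlpa := lambdaPlus_lt ha hab hs
  have hlmb := lt_lambdaMinus hb hab hs
  unfold lambdaPlus lambdaMinus at *
  exact ⟨hpos, (hlm.trans hlp).ne', cayley_eq_zero_iff hab hs,
    ⟨by linarith, by linarith, by linarith⟩, ⟨by linarith, by linarith, by linarith⟩⟩
end

section
/- Let a, b ∈ ℝ with ab ≠ 0, a ≠ b and a ≠ −b, and set λ₁ = ab/(b−a), λ₂ = ab/(a+b), λ₃ = ab/(a−b). Then λ₁, λ₂, λ₃ are pairwise distinct and each is a root of the cubic polynomial (a+b)(a−b)²X³ − ab(a−b)²X² − (ab)²(a+b)X + (ab)³ (whose leading coefficient (a+b)(a−b)² is nonzero, so these are all its roots). If moreover a > b > 0, then: a − λ₁ > a > a − λ₂ > 0 and b − λ₁ > b > b − λ₂ > 0; b − λ₃ < 0; and a − λ₃ > 0 if a > 2b, a − λ₃ = 0 if a = 2b,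 a − λ₃ < 0 if a < 2b. -/
/-!
The cubic factors as `((a+b)X - ab) · ((a-b)X - ab) · ((a-b)X + ab)`, so its roots are the
numbers `ab / c` for `c ∈ {a+b, a-b, b-a}`; they are distinct because these three denominators
are. The sign conditions for `a > b > 0` come from `λ₁ < 0 < λ₂ < b < λ₃` together with
`a - λ₃ = a (a - 2b) / (a - b)`.
-/

theorem div_right_injective_of_ne_zero {G₀ : Type*} [GroupWithZero G₀] {a : G₀} (ha : a ≠ 0) :
    Function.Injective (a / ·) :=
  fun _ _ h => inv_injective (mul_left_cancel₀ ha (by simpa only [div_eq_mul_inv] using h))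

section Field

variable {K : Type*} [Field K]

def causticCubic (a b x : K) : K :=
  (a + b) * (a - b) ^ 2 * x ^ 3 - a * b * (a - b) ^ 2 * x ^ 2
    - (a * b) ^ 2 * (a + b) * x + (a * b) ^ 3

theorem causticCubic_eq_mul (a b x : K) :
    causticCubic a b x = ((a + b) * x - a * b) * ((a - b) * x - a * b) * ((a - b) * x + a * b) := by
  unfold causticCubic
  ring

theorem causticCubic_eq_zero_iff {a b x : K} :
    causticCubic a b x = 0 ↔
      (a + b) * x = a * b ∨ (a - b) * x = a * b ∨ (b - a) * x = a * b := by
  have h : (a - b) * x + a * b = 0 ↔ (b - a) * x = a * b := by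
    constructor <;> intro h <;> linear_combination -h
  rw [causticCubic_eq_mul, mul_eq_zero, mul_eq_zero, sub_eq_zero, sub_eq_zero, h, or_assoc]

theorem sub_mul_div_sub {a b : K} (hab : a ≠ b) :
    a - a * b / (a - b) = a * (a - 2 * b) / (a - b) := by
  field_simp [sub_ne_zero.2 hab]
  ring

end Field

section Ordered

variable {K : Type*} [Field K] [LinearOrder K] [IsStrictOrderedRing K] {a b : K}

theorem mul_div_add_lt_left (ha : 0 < a) (hb : 0 < b) : a * b / (a + b) < a := by
  rw [div_lt_iff₀ (by positivity)]
  nlinarith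

theorem lt_mul_div_sub (hb : 0 < b) (hba : b < a) : b < a * b / (a - b) := by
  rw [lt_div_iff₀ (sub_pos.2 hba)]
  nlinarith

theorem caustic_sign_conditions (hba : b < a) (hb : 0 < b) :
    (a - a * b / (b - a) > a ∧ a > a - a * b / (a + b) ∧ a - a * b / (a + b) > 0) ∧
    (b - a * b / (b - a) > b ∧ b > b - a * b / (a + b) ∧ b - a * b / (a + b) > 0) ∧
    b - a * b / (a - b) < 0 ∧
    (a > 2 * b → a - a * b / (a - b) > 0) ∧ (a = 2 * b → a - a * b / (a - b) = 0) ∧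
    (a < 2 * b → a - a * b / (a - b) < 0) := by
  have ha : 0 < a := hb.trans hba
  have hab : 0 < a - b := sub_pos.2 hba
  have hl1 : a * b / (b - a) < 0 := div_neg_of_pos_of_neg (by positivity) (sub_neg.2 hba)
  have hl2 : 0 < a * b / (a + b) := by positivity
  have hl2a : a * b / (a + b) < a := mul_div_add_lt_left ha hb
  have hl2b : a * b / (a + b) < b := by
    simpa only [mul_comm, add_comm] using mul_div_add_lt_left hb ha
  have hl3 : b < a * b / (a - b) := lt_mul_div_sub hb hba
  rw [sub_mul_div_sub hba.ne']
  refine ⟨⟨by linarith, by linarith, by linarith⟩, ⟨by linarith, by linarith, by linarith⟩,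
    by linarith, fun h => ?_, fun h => ?_, fun h => ?_⟩
  · exact div_pos (mul_pos ha (by linarith)) hab
  · rw [h, sub_self, mul_zero, zero_div]
  · exact div_neg_of_neg_of_pos (mul_neg_of_pos_of_neg ha (by linarith)) hab

end Ordered

/-- The algebraic content of Proposition 2.28 (4-caustics): for `ab ≠ 0`, `a ≠ b`,
`a ≠ −b`, the numbers `λ₁ = ab/(b−a)`, `λ₂ = ab/(a+b)`, `λ₃ = ab/(a−b)` are pairwise
distinct roots of the cubic `(a+b)(a−b)²X³ − ab(a−b)²X² − (ab)²(a+b)X + (ab)³`, whose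
leading coefficient is nonzero; and when `a > b > 0` the stated sign inequalities hold. -/
theorem four_caustics_roots (a b : ℝ) (hab : a * b ≠ 0) (h1 : a ≠ b) (h2 : a ≠ -b) :
    let l1 : ℝ := a * b / (b - a)
    let l2 : ℝ := a * b / (a + b)
    let l3 : ℝ := a * b / (a - b)
    let P : ℝ → ℝ := fun x => (a + b) * (a - b) ^ 2 * x ^ 3 - a * b * (a - b) ^ 2 * x ^ 2
      - (a * b) ^ 2 * (a + b) * x + (a * b) ^ 3
    (l1 ≠ l2 ∧ l1 ≠ l3 ∧ l2 ≠ l3) ∧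
    (a + b) * (a - b) ^ 2 ≠ 0 ∧
    (P l1 = 0 ∧ P l2 = 0 ∧ P l3 = 0) ∧
    (a > b → b > 0 →
      ((a - l1 > a ∧ a > a - l2 ∧ a - l2 > 0) ∧
       (b - l1 > b ∧ b > b - l2 ∧ b - l2 > 0) ∧
       b - l3 < 0 ∧
       (a > 2 * b → a - l3 > 0) ∧ (a = 2 * b → a - l3 = 0) ∧ (a < 2 * b → a - l3 < 0))) := by
  intro l1 l2 l3 P
  have ha : a ≠ 0 := left_ne_zero_of_mul hab
  have hb : b ≠ 0 := right_ne_zero_of_mul hab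
  have hamb : a - b ≠ 0 := sub_ne_zero.2 h1
  have hbma : b - a ≠ 0 := sub_ne_zero.2 h1.symm
  have hapb : a + b ≠ 0 := fun h => h2 (eq_neg_of_add_eq_zero_left h)
  have hl : ∀ {c d : ℝ}, c ≠ d → a * b / c ≠ a * b / d :=
    fun hcd h => hcd (div_right_injective_of_ne_zero hab h)
  refine ⟨⟨hl ?_, hl ?_, hl ?_⟩, mul_ne_zero hapb (pow_ne_zero 2 hamb),
    ⟨causticCubic_eq_zero_iff.2 (.inr (.inr (mul_div_cancel₀ _ hbma))),
      causticCubic_eq_zero_iff.2 (.inl (mul_div_cancel₀ _ hapb)),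
      causticCubic_eq_zero_iff.2 (.inr (.inl (mul_div_cancel₀ _ hamb)))⟩,
    caustic_sign_conditions⟩
  · contrapose! ha; linarith
  · contrapose! h1; linarith
  · contrapose! hb; linarith
end

section
/- Let a, b ∈ ℂ be nonzero and define the symmetric bilinear form Φ((x,y),(x',y')) = xx'/a + yy'/b on ℂ². Let p₀, p₁ ∈ ℂ² with Φ(p₀,p₀) = 1, Φ(p₁,p₁) = 1 and p₀ ≠ p₁, and let v₀, v₁ ∈ ℂ² with Φ₀(v₀) := v₀·v₀ = 1 and v₁·v₁ = 1 (dot product of the complexified Euclidean form x² + y²). Assume p₁ − p₀ = t·v₀ for some t ∈ ℂ, and that Φ(v₀ + v₁, p₁) = 0 or Φ(v₀ − v₁, p₁) = 0 (the complex billiard reflection condition at p₁). Then Φ(v₀, p₀)² = Φ(v₁, p₁)². -/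
/-!
Write `p₁ = p₀ + t v₀` with `t ≠ 0`. By symmetry of `Φ`,
`t Φ(v₀, p₀ + p₁) = Φ(p₁ - p₀, p₁ + p₀) = Φ(p₁, p₁) - Φ(p₀, p₀) = 0`,
i.e. `Φ(v₀, p₀) = -Φ(v₀, p₁)`: the Joachimsthal quantity changes only by sign along a chord.
The reflection condition says `Φ(v₀, p₁) = ∓Φ(v₁, p₁)`, so squaring removes both signs.
-/

namespace LinearMap.BilinForm

variable {R M : Type*} [CommRing R] [NoZeroDivisors R] [AddCommGroup M] [Module R M]
  {B : LinearMap.BilinForm R M} {p₀ p₁ v₀ v₁ : M} {t : R}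

theorem IsSymm.apply_add_apply_eq_zero_of_chord (hB : B.IsSymm) (hp : B p₀ p₀ = B p₁ p₁)
    (hne : p₀ ≠ p₁) (hchord : p₁ - p₀ = t • v₀) : B v₀ p₀ + B v₀ p₁ = 0 := by
  have ht : t ≠ 0 := by
    rintro rfl
    exact hne (sub_eq_zero.mp (by rw [hchord, zero_smul])).symm
  have hdiff : B (p₁ - p₀) (p₀ + p₁) = 0 := by
    simp only [map_sub, map_add, LinearMap.sub_apply, hp, hB.eq p₁ p₀]
    ring
  rw [hchord, map_smul, LinearMap.smul_apply, smul_eq_mul, map_add] at hdiff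
  exact (mul_eq_zero.mp hdiff).resolve_left ht

theorem IsSymm.sq_apply_eq_of_reflection (hB : B.IsSymm) (hp : B p₀ p₀ = B p₁ p₁)
    (hne : p₀ ≠ p₁) (hchord : p₁ - p₀ = t • v₀)
    (hrefl : B (v₀ + v₁) p₁ = 0 ∨ B (v₀ - v₁) p₁ = 0) : B v₀ p₀ ^ 2 = B v₁ p₁ ^ 2 := by
  have hsign : B v₀ p₀ = -B v₀ p₁ :=
    eq_neg_of_add_eq_zero_left (hB.apply_add_apply_eq_zero_of_chord hp hne hchord)
  rw [hsign, neg_sq, sq_eq_sq_iff_eq_or_eq_neg]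
  rw [map_add, LinearMap.add_apply, add_eq_zero_iff_eq_neg, map_sub, LinearMap.sub_apply,
    sub_eq_zero] at hrefl
  exact hrefl.symm

end LinearMap.BilinForm

noncomputable def conicForm (a b : ℂ) : LinearMap.BilinForm ℂ (ℂ × ℂ) :=
  LinearMap.mk₂ ℂ (fun p q => p.1 * q.1 / a + p.2 * q.2 / b)
    (fun _ _ _ => by simp only [Prod.fst_add, Prod.snd_add]; ring)
    (fun _ _ _ => by simp only [Prod.smul_fst, Prod.smul_snd, smul_eq_mul]; ring)
    (fun _ _ _ => by simp only [Prod.fst_add, Prod.snd_add]; ring)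
    (fun _ _ _ => by simp only [Prod.smul_fst, Prod.smul_snd, smul_eq_mul]; ring)

theorem isSymm_conicForm (a b : ℂ) : (conicForm a b).IsSymm :=
  ⟨fun p q => by simp only [conicForm, LinearMap.mk₂_apply]; ring⟩

theorem complex_joachimsthal_invariant_general (a b : ℂ)
    (p₀ p₁ v₀ v₁ : ℂ × ℂ)
    (hp₀ : p₀.1 * p₀.1 / a + p₀.2 * p₀.2 / b = 1)
    (hp₁ : p₁.1 * p₁.1 / a + p₁.2 * p₁.2 / b = 1)
    (hne : p₀ ≠ p₁)
    (hchord : ∃ t : ℂ, p₁ - p₀ = t • v₀)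
    (hrefl : (v₀.1 + v₁.1) * p₁.1 / a + (v₀.2 + v₁.2) * p₁.2 / b = 0 ∨
             (v₀.1 - v₁.1) * p₁.1 / a + (v₀.2 - v₁.2) * p₁.2 / b = 0) :
    (v₀.1 * p₀.1 / a + v₀.2 * p₀.2 / b) ^ 2 = (v₁.1 * p₁.1 / a + v₁.2 * p₁.2 / b) ^ 2 := by
  obtain ⟨t, ht⟩ := hchord
  exact (isSymm_conicForm a b).sq_apply_eq_of_reflection (hp₀.trans hp₁.symm) hne ht hrefl

/-- Invariance of the complex Joachimsthal quantity under one billiard reflection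
(the finite-vertex case of Proposition 2.29). Here `Φ(p,q) = p₁q₁/a + p₂q₂/b` is the
bilinear form of the complexified conic `C : x²/a + y²/b = 1`, `p₀, p₁ ∈ C`, `v₀` is a
unit direction (for the complexified Euclidean form `x² + y²`) of the chord `p₀p₁`,
`v₁` is a unit direction of the next chord, and the reflection condition at `p₁` is
`Φ(v₀ + v₁, p₁) = 0` or `Φ(v₀ − v₁, p₁) = 0`. Then `Φ(v₀,p₀)² = Φ(v₁,p₁)²`. -/
theorem complex_joachimsthal_invariant (a b : ℂ) (ha : a ≠ 0) (hb : b ≠ 0)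
    (p₀ p₁ v₀ v₁ : ℂ × ℂ)
    (hp₀ : p₀.1 * p₀.1 / a + p₀.2 * p₀.2 / b = 1)
    (hp₁ : p₁.1 * p₁.1 / a + p₁.2 * p₁.2 / b = 1)
    (hne : p₀ ≠ p₁)
    (hv₀ : v₀.1 * v₀.1 + v₀.2 * v₀.2 = 1)
    (hv₁ : v₁.1 * v₁.1 + v₁.2 * v₁.2 = 1)
    (hchord : ∃ t : ℂ, p₁ - p₀ = t • v₀)
    (hrefl : (v₀.1 + v₁.1) * p₁.1 / a + (v₀.2 + v₁.2) * p₁.2 / b = 0 ∨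
             (v₀.1 - v₁.1) * p₁.1 / a + (v₀.2 - v₁.2) * p₁.2 / b = 0) :
    (v₀.1 * p₀.1 / a + v₀.2 * p₀.2 / b) ^ 2 = (v₁.1 * p₁.1 / a + v₁.2 * p₁.2 / b) ^ 2 :=
  complex_joachimsthal_invariant_general a b p₀ p₁ v₀ v₁ hp₀ hp₁ hne hchord hrefl
end

section
/- Let a, b ∈ ℂ be nonzero, λ ∈ ℂ, (x₀, y₀) ∈ ℂ² with x₀²/a + y₀²/b = 1, and (v_x, v_y) ∈ ℂ². Then (a−λ)·v_y² + (b−λ)·v_x² − (v_x y₀ − v_y x₀)² = −(v_x² + v_y²)·λ + ab·(x₀v_x/a + y₀v_y/b)². In particular, if v_x² + v_y² ≠ 0 and (a−λ)v_y² + (b−λ)v_x² − (v_x y₀ − v_y x₀)² = 0, then λ = ab·(x₀v_x/a + y₀v_y/b)²/(v_x² + v_y²). -/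
/-- Lagrange's identity `‖p‖²‖v‖² = (p × v)² + ⟪p, v⟫²` for `p = (x₀/√a, y₀/√b)` and
`v = (√b vx, √a vy)`, written without square roots. -/
theorem mul_conic_eq_cross_sq_add_polar_sq {K : Type*} [Field K] {a b : K} (ha : a ≠ 0)
    (hb : b ≠ 0) (x₀ y₀ vx vy : K) :
    (a * vy ^ 2 + b * vx ^ 2) * (x₀ ^ 2 / a + y₀ ^ 2 / b) =
      (vx * y₀ - vy * x₀) ^ 2 + a * b * (x₀ * vx / a + y₀ * vy / b) ^ 2 := by
  field_simp
  ring

/-- Computational content of Proposition 2.32: for a point `(x₀,y₀)` on the complexified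
conic `x²/a + y²/b = 1` and a direction `(vx,vy)`, one has the identity
`(a−λ)vy² + (b−λ)vx² − (vx·y₀ − vy·x₀)² = −(vx²+vy²)·λ + ab·(x₀vx/a + y₀vy/b)²`;
hence if `vx²+vy² ≠ 0` and the left side vanishes (tangency to the confocal conic `C_λ`),
then `λ = ab·P` where `P` is the complex Joachimsthal invariant. -/
theorem joachimsthal_caustic_identity (a b : ℂ) (ha : a ≠ 0) (hb : b ≠ 0)
    (lam x₀ y₀ vx vy : ℂ) (hp : x₀ ^ 2 / a + y₀ ^ 2 / b = 1) :
    (a - lam) * vy ^ 2 + (b - lam) * vx ^ 2 - (vx * y₀ - vy * x₀) ^ 2 =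
      -(vx ^ 2 + vy ^ 2) * lam + a * b * (x₀ * vx / a + y₀ * vy / b) ^ 2 ∧
    (vx ^ 2 + vy ^ 2 ≠ 0 →
      (a - lam) * vy ^ 2 + (b - lam) * vx ^ 2 - (vx * y₀ - vy * x₀) ^ 2 = 0 →
      lam = a * b * (x₀ * vx / a + y₀ * vy / b) ^ 2 / (vx ^ 2 + vy ^ 2)) := by
  have key : (a - lam) * vy ^ 2 + (b - lam) * vx ^ 2 - (vx * y₀ - vy * x₀) ^ 2 =
      -(vx ^ 2 + vy ^ 2) * lam + a * b * (x₀ * vx / a + y₀ * vy / b) ^ 2 := by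
    linear_combination mul_conic_eq_cross_sq_add_polar_sq ha hb x₀ y₀ vx vy -
      (a * vy ^ 2 + b * vx ^ 2) * hp
  refine ⟨key, fun hv htangent => ?_⟩
  rw [eq_div_iff hv]
  linear_combination -(key.symm.trans htangent)
end

section
/- Let E be a finite-dimensional real inner product space, let M : E →ₗ[ℝ] E be a linear endomorphism, and let w, ξ ∈ E. Assume that for every β ∈ ℝ such that ker(M − β·id) ≠ {0}, the vector w does not belong to the range of M − β·id. Define the linear map f : E →ₗ[ℝ] E by f(x) = M(x) + ⟨ξ, x⟩·w. Then for every α ∈ ℝ, either the eigenspace ker(f − α·id) has dimension at most 1, or every x ∈ ker(f − α·id) satisfies ⟨ξ, x⟩ = 0. -/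
/-!
On the eigenspace `K = ker (f - α)` we have `(M - α) x = -⟨ξ, x⟩ • w`. A vector of `K` with
`⟨ξ, x⟩ ≠ 0` therefore puts `w` in the range of `M - α`, while if `dim K ≥ 2` the hyperplane
`ξ^⊥` meets `K` in a nonzero vector, which is then an eigenvector of `M` for `α`. The hypothesis
forbids both happening at once.
-/

namespace LinearMap

section RankOnePerturbation

variable {K V : Type*} [Field K] [AddCommGroup V] [Module K V]
  {M f : V →ₗ[K] V} {φ : V →ₗ[K] K} {w x : V} {α : K}

theorem sub_smul_id_apply_eq_neg_smul_of_mem_ker (hf : ∀ x, f x = M x + φ x • w)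
    (hx : x ∈ ker (f - α • id)) : (M - α • (id : V →ₗ[K] V)) x = -(φ x • w) := by
  rw [mem_ker, sub_apply, smul_apply, id_apply, hf] at hx
  rw [sub_apply, smul_apply, id_apply]
  linear_combination (norm := abel) hx

theorem mem_range_sub_smul_id_of_mem_ker (hf : ∀ x, f x = M x + φ x • w)
    (hx : x ∈ ker (f - α • id)) (hφx : φ x ≠ 0) : w ∈ range (M - α • id) :=
  ⟨-(φ x)⁻¹ • x, by
    rw [map_smul, sub_smul_id_apply_eq_neg_smul_of_mem_ker hf hx, smul_neg, neg_smul, neg_neg,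
      smul_smul, inv_mul_cancel₀ hφx, one_smul]⟩

theorem mem_ker_sub_smul_id_of_mem_ker (hf : ∀ x, f x = M x + φ x • w)
    (hx : x ∈ ker (f - α • id)) (hφx : φ x = 0) : x ∈ ker (M - α • id) := by
  rw [mem_ker, sub_smul_id_apply_eq_neg_smul_of_mem_ker hf hx, hφx, zero_smul, neg_zero]

end RankOnePerturbation

end LinearMap

theorem Submodule.exists_mem_ne_zero_apply_eq_zero_of_one_lt_finrank {K V : Type*} [Field K]
    [AddCommGroup V] [Module K V] {W : Submodule K V} (hW : 1 < Module.finrank K W)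
    (φ : V →ₗ[K] K) : ∃ x ∈ W, x ≠ 0 ∧ φ x = 0 := by
  have : FiniteDimensional K W := Module.finite_of_finrank_pos (by omega)
  have hker : LinearMap.ker (φ ∘ₗ W.subtype) ≠ ⊥ :=
    LinearMap.ker_ne_bot_of_finrank_lt (by rwa [Module.finrank_self])
  obtain ⟨x, hx, hx0⟩ := Submodule.exists_mem_ne_zero_of_ne_bot hker
  exact ⟨x, x.2, by simpa using hx0, hx⟩

theorem eigenspaces_of_rank_one_perturbation_general
    {E : Type*} [NormedAddCommGroup E] [InnerProductSpace ℝ E]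
    (M : E →ₗ[ℝ] E) (w ξ : E)
    (hw : ∀ β : ℝ, LinearMap.ker (M - β • (LinearMap.id : E →ₗ[ℝ] E)) ≠ ⊥ →
      w ∉ LinearMap.range (M - β • (LinearMap.id : E →ₗ[ℝ] E)))
    (f : E →ₗ[ℝ] E) (hf : ∀ x : E, f x = M x + (inner ℝ ξ x : ℝ) • w) :
    ∀ α : ℝ,
      Module.finrank ℝ (LinearMap.ker (f - α • (LinearMap.id : E →ₗ[ℝ] E))) ≤ 1 ∨
      ∀ x ∈ LinearMap.ker (f - α • (LinearMap.id : E →ₗ[ℝ] E)), (inner ℝ ξ x : ℝ) = 0 := by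
  intro α
  rw [or_iff_not_imp_left, not_le]
  intro hdim x hx
  by_contra hξx
  have hf' : ∀ x, f x = M x + innerₛₗ ℝ ξ x • w := hf
  obtain ⟨z, hz, hz0, hξz⟩ :=
    Submodule.exists_mem_ne_zero_apply_eq_zero_of_one_lt_finrank hdim (innerₛₗ ℝ ξ)
  have hMz := LinearMap.mem_ker_sub_smul_id_of_mem_ker hf' hz hξz
  refine hw α ?_ (LinearMap.mem_range_sub_smul_id_of_mem_ker hf' hx hξx)
  exact fun hbot ↦ hz0 (by rwa [hbot, Submodule.mem_bot] at hMz)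

/-- Lemma 2.47: let `E` be a finite-dimensional real inner product space, `M` a linear
endomorphism of `E` and `w, ξ ∈ E`. If for every real eigenvalue `β` of `M` the vector `w`
is not in the range of `M − β·id`, then for the map `f : x ↦ Mx + ⟨ξ,x⟩·w` every
eigenspace is either of dimension at most 1 or consists of vectors orthogonal to `ξ`. -/
theorem eigenspaces_of_rank_one_perturbation
    {E : Type*} [NormedAddCommGroup E] [InnerProductSpace ℝ E] [FiniteDimensional ℝ E]
    (M : E →ₗ[ℝ] E) (w ξ : E)
    (hw : ∀ β : ℝ, LinearMap.ker (M - β • (LinearMap.id : E →ₗ[ℝ] E)) ≠ ⊥ →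
      w ∉ LinearMap.range (M - β • (LinearMap.id : E →ₗ[ℝ] E)))
    (f : E →ₗ[ℝ] E) (hf : ∀ x : E, f x = M x + (inner ℝ ξ x : ℝ) • w) :
    ∀ α : ℝ,
      Module.finrank ℝ (LinearMap.ker (f - α • (LinearMap.id : E →ₗ[ℝ] E))) ≤ 1 ∨
      ∀ x ∈ LinearMap.ker (f - α • (LinearMap.id : E →ₗ[ℝ] E)), (inner ℝ ξ x : ℝ) = 0 :=
  eigenspaces_of_rank_one_perturbation_general M w ξ hw f hf
end

section
/- Let n, k be positive integers, V ⊆ ℝⁿ a Lebesgue measurable set, and p ∈ ℝⁿ a Lebesgue density point of V. Let f, g : ℝⁿ → ℝᵏ be maps that are (Fréchet) differentiable at p and satisfy f(x) = g(x) for all x ∈ V. Then f(p) = g(p) and the derivatives of f and g at p coincide: Df(p) = Dg(p); i.e. the 1-jets of f and g at p coincide. -/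
/-!
At a density point `p` of `V`, every ball `B(p + t v, ε t)` meets `V` for small `t > 0`:
otherwise, for arbitrarily small `t`, it would occupy a fixed proportion `(ε / (‖v‖ + ε))ⁿ` of
`B(p, (‖v‖ + ε) t)` while missing `V`. Hence every vector is tangent to `V` at `p`, which makes
the derivative within `V` at `p` unique.
-/

open MeasureTheory Filter Metric Module Set Topology

def IsDensityPoint {E : Type*} [PseudoMetricSpace E] [MeasurableSpace E] (μ : Measure E)
    (V : Set E) (p : E) : Prop :=
  Tendsto (fun r : ℝ => μ (V ∩ ball p r) / μ (ball p r)) (𝓝[>] 0) (𝓝 1)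

theorem tendsto_const_mul_nhdsGT_zero {R : ℝ} (hR : 0 < R) :
    Tendsto (fun t : ℝ => R * t) (𝓝[>] 0) (𝓝[>] 0) :=
  tendsto_nhdsWithin_iff.2
    ⟨by simpa using ((continuous_const_mul R).tendsto 0).mono_left nhdsWithin_le_nhds,
      eventually_mem_nhdsWithin.mono fun _ ht => mul_pos hR ht⟩

theorem mem_tangentConeAt_of_eventually_inter_ball_nonempty {F : Type*} [NormedAddCommGroup F]
    [NormedSpace ℝ F] {s : Set F} {x v : F}
    (h : ∀ ε > 0, ∀ᶠ t in 𝓝[>] 0, (s ∩ ball (x + t • v) (ε * t)).Nonempty) :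
    v ∈ tangentConeAt ℝ s x := by
  rw [tangentConeAt_eq_biInter_closure, mem_iInter₂]
  intro U hU
  rw [Metric.mem_closure_iff]
  intro ε hε
  obtain ⟨r, hr, hrU⟩ := Metric.mem_nhds_iff.1 hU
  obtain ⟨t, ⟨y, hys, hy⟩, ht, htr⟩ :=
    ((h ε hε).and (Ioo_mem_nhdsGT (show 0 < r / (‖v‖ + ε) by positivity))).exists
  rw [mem_ball, dist_eq_norm] at hy
  rw [lt_div_iff₀ (by positivity)] at htr
  have hyx : ‖y - x‖ < r :=
    calc ‖y - x‖ ≤ ‖y - (x + t • v)‖ + ‖t • v‖ := by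
          simpa [sub_add_eq_sub_sub] using norm_sub_le_norm_sub_add_norm_sub (y - x) (t • v) 0
      _ < ε * t + t * ‖v‖ := by
          rw [norm_smul, Real.norm_of_nonneg ht.le]
          linarith
      _ < r := by linarith
  refine ⟨t⁻¹ • (y - x), ⟨t⁻¹, mem_univ _, y - x, ⟨hrU (by simpa using hyx), by simpa⟩, rfl⟩, ?_⟩
  have hrescale : t⁻¹ • (y - x) - v = t⁻¹ • (y - (x + t • v)) := by
    rw [smul_sub, smul_sub, smul_add, inv_smul_smul₀ ht.ne']
    abel
  rw [dist_comm, dist_eq_norm, hrescale, norm_smul, Real.norm_of_nonneg (inv_nonneg.2 ht.le),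
    inv_mul_lt_iff₀ ht]
  linarith

section AddHaar

variable {E : Type*} [NormedAddCommGroup E] [NormedSpace ℝ E] [FiniteDimensional ℝ E]
  [MeasurableSpace E] [BorelSpace E] (μ : Measure E) [μ.IsAddHaarMeasure]

theorem addHaar_ball_div_addHaar_ball (p q : E) {r s : ℝ} (hr : 0 < r) (hs : 0 < s) :
    μ (ball q s) / μ (ball p r) = ENNReal.ofReal ((s / r) ^ finrank ℝ E) := by
  have hball : μ (ball q s) = ENNReal.ofReal ((s / r) ^ finrank ℝ E) * μ (ball p r) := by
    rw [← div_mul_cancel₀ s hr.ne', Measure.addHaar_ball_mul_of_pos μ q (by positivity),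
      Measure.addHaar_ball_center μ p, div_mul_cancel₀ s hr.ne']
  rw [hball, ENNReal.mul_div_cancel_right (measure_ball_pos μ p hr).ne' measure_ball_lt_top.ne]

theorem addHaar_inter_ball_div_le_of_disjoint {V : Set E} {p q : E} {r s : ℝ} (hr : 0 < r)
    (hs : 0 < s) (hsub : ball q s ⊆ ball p r) (hV : Disjoint V (ball q s)) :
    μ (V ∩ ball p r) / μ (ball p r) ≤ 1 - ENNReal.ofReal ((s / r) ^ finrank ℝ E) := by
  have hle : μ (V ∩ ball p r) ≤ μ (ball p r) - μ (ball q s) := by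
    rw [← measure_sdiff hsub measurableSet_ball.nullMeasurableSet measure_ball_lt_top.ne]
    exact measure_mono fun x hx => ⟨hx.2, hV.notMem_of_mem_left hx.1⟩
  calc μ (V ∩ ball p r) / μ (ball p r) ≤ (μ (ball p r) - μ (ball q s)) / μ (ball p r) := by
        gcongr
    _ = 1 - ENNReal.ofReal ((s / r) ^ finrank ℝ E) := by
        rw [ENNReal.sub_div fun _ _ => (measure_ball_pos μ p hr).ne',
          ENNReal.div_self (measure_ball_pos μ p hr).ne' measure_ball_lt_top.ne,
          addHaar_ball_div_addHaar_ball μ p q hr hs]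

variable {μ} {V : Set E} {p : E}

theorem IsDensityPoint.eventually_inter_ball_nonempty (hp : IsDensityPoint μ V p) (v : E)
    {ε : ℝ} (hε : 0 < ε) : ∀ᶠ t in 𝓝[>] 0, (V ∩ ball (p + t • v) (ε * t)).Nonempty := by
  set R := ‖v‖ + ε
  have hR : 0 < R := by positivity
  have hgap : 1 - ENNReal.ofReal ((ε / R) ^ finrank ℝ E) < 1 :=
    ENNReal.sub_lt_self ENNReal.one_ne_top one_ne_zero (by positivity)
  filter_upwards [(hp.comp (tendsto_const_mul_nhdsGT_zero hR)).eventually (lt_mem_nhds hgap),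
    self_mem_nhdsWithin] with t hratio (ht : 0 < t)
  rw [← not_disjoint_iff_nonempty_inter]
  intro hdisj
  have hsub : ball (p + t • v) (ε * t) ⊆ ball p (R * t) := by
    refine ball_subset_ball' ?_
    rw [dist_self_add_left, norm_smul, Real.norm_of_nonneg ht.le]
    linarith
  refine hratio.not_ge ?_
  simpa [mul_div_mul_right ε R ht.ne'] using
    addHaar_inter_ball_div_le_of_disjoint μ (by positivity) (by positivity) hsub hdisj

theorem IsDensityPoint.tangentConeAt_eq_univ (hp : IsDensityPoint μ V p) :
    tangentConeAt ℝ V p = univ :=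
  eq_univ_of_forall fun v => mem_tangentConeAt_of_eventually_inter_ball_nonempty
    fun _ hε => hp.eventually_inter_ball_nonempty v hε

theorem IsDensityPoint.uniqueDiffWithinAt (hp : IsDensityPoint μ V p) :
    UniqueDiffWithinAt ℝ V p where
  dense_tangentConeAt := by simp [hp.tangentConeAt_eq_univ]
  mem_closure := mem_closure_of_nonempty_tangentConeAt ⟨0, hp.tangentConeAt_eq_univ ▸ mem_univ 0⟩

end AddHaar

theorem one_jets_coincide_at_density_point_general
    (n k : ℕ)
    (V : Set (EuclideanSpace ℝ (Fin n)))
    (p : EuclideanSpace ℝ (Fin n))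
    (hdensity : Filter.Tendsto
      (fun r : ℝ => volume (V ∩ Metric.ball p r) / volume (Metric.ball p r))
      (nhdsWithin 0 (Set.Ioi 0)) (nhds 1))
    (f g : EuclideanSpace ℝ (Fin n) → EuclideanSpace ℝ (Fin k))
    (f' g' : EuclideanSpace ℝ (Fin n) →L[ℝ] EuclideanSpace ℝ (Fin k))
    (hf : HasFDerivAt f f' p) (hg : HasFDerivAt g g' p)
    (heq : ∀ x ∈ V, f x = g x) :
    f p = g p ∧ f' = g' := by
  have hV : UniqueDiffWithinAt ℝ V p :=
    IsDensityPoint.uniqueDiffWithinAt (μ := volume) hdensity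
  have : (𝓝[V] p).NeBot := mem_closure_iff_nhdsWithin_neBot.1 hV.mem_closure
  have hfg : f p = g p :=
    tendsto_nhds_unique_of_eventuallyEq hf.continuousAt.continuousWithinAt
      hg.continuousAt.continuousWithinAt (eventually_mem_nhdsWithin.mono heq)
  exact ⟨hfg, hV.eq hf.hasFDerivWithinAt (hg.hasFDerivWithinAt.congr heq hfg)⟩

/-- Lemma 3.27: if `f, g : ℝⁿ → ℝᵏ` are differentiable at a Lebesgue density point `p`
of a measurable set `V` and coincide on `V`, then their 1-jets at `p` coincide:
`f(p) = g(p)` and `Df(p) = Dg(p)`. -/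
theorem one_jets_coincide_at_density_point
    (n k : ℕ) (hn : 0 < n) (hk : 0 < k)
    (V : Set (EuclideanSpace ℝ (Fin n))) (hV : MeasurableSet V)
    (p : EuclideanSpace ℝ (Fin n))
    (hdensity : Filter.Tendsto
      (fun r : ℝ => volume (V ∩ Metric.ball p r) / volume (Metric.ball p r))
      (nhdsWithin 0 (Set.Ioi 0)) (nhds 1))
    (f g : EuclideanSpace ℝ (Fin n) → EuclideanSpace ℝ (Fin k))
    (f' g' : EuclideanSpace ℝ (Fin n) →L[ℝ] EuclideanSpace ℝ (Fin k))
    (hf : HasFDerivAt f f' p) (hg : HasFDerivAt g g' p)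
    (heq : ∀ x ∈ V, f x = g x) :
    f p = g p ∧ f' = g' :=
  one_jets_coincide_at_density_point_general n k V p hdensity f g f' g' hf hg heq
end

section
/- Let n ≥ 1, let V ⊆ ℝⁿ be a Lebesgue measurable set, and suppose 0 is a Lebesgue density point of V. Then for every r > 0, the set {v/‖v‖ : v ∈ V ∩ B(0,r), v ≠ 0} of normalized directions of points of V near 0 is dense in the unit sphere {x ∈ ℝⁿ : ‖x‖ = 1}. -/
/-!
Given an open neighbourhood `U` of a unit vector, let `t` be the set of vectors of norm `< 1`
whose direction lies in `U`: an open set of positive, finite measure. A density point of `V` at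
`0` is also a density point along the dilates `r • t` (Mathlib's
`tendsto_addHaar_inter_smul_one_of_density_one`), so `V` meets `r • t` for arbitrarily small `r`,
and the direction of such a point lies in `U` because directions are invariant under positive
scaling.
-/

open MeasureTheory Metric Filter Topology Set NormedSpace
open scoped Pointwise ENNReal

section Cone

variable {V : Type*} [NormedAddCommGroup V] [NormedSpace ℝ V] {U : Set V}

def directionCone (U : Set V) : Set V := {0}ᶜ ∩ normalize ⁻¹' U

theorem continuousOn_normalize : ContinuousOn (normalize : V → V) {0}ᶜ :=
  (continuous_norm.continuousOn.inv₀ fun _ hx => norm_ne_zero_iff.mpr hx).smul continuousOn_id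

theorem isOpen_directionCone (hU : IsOpen U) : IsOpen (directionCone U) :=
  continuousOn_normalize.isOpen_inter_preimage isOpen_compl_singleton hU

theorem smul_mem_directionCone {v : V} (hv : v ∈ directionCone U) {r : ℝ} (hr : 0 < r) :
    r • v ∈ directionCone U :=
  ⟨smul_ne_zero hr.ne' hv.1, by simpa [mem_preimage, normalize_smul_of_pos hr] using hv.2⟩

theorem mem_directionCone_of_norm_eq_one {u : V} (hu : u ∈ U) (h : ‖u‖ = 1) :
    u ∈ directionCone U :=
  ⟨by rintro rfl; simp at h, by simpa [mem_preimage, normalize_eq_self_of_norm_eq_one h] using hu⟩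

end Cone

section Density

variable {E : Type*} [NormedAddCommGroup E] [NormedSpace ℝ E] [MeasurableSpace E] [BorelSpace E]
  [FiniteDimensional ℝ E] (μ : Measure E) [μ.IsAddHaarMeasure]

theorem closedBall_ae_eq_ball_of_ne_zero (x : E) {r : ℝ} (hr : r ≠ 0) :
    closedBall x r =ᵐ[μ] ball x r := by
  refine ae_eq_set.mpr ⟨?_, ?_⟩
  · rw [closedBall_sdiff_ball]
    exact Measure.addHaar_sphere_of_ne_zero μ x hr
  · rw [sdiff_eq_empty.mpr ball_subset_closedBall, measure_empty]

variable {μ}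

theorem tendsto_measure_inter_closedBall_div_of_ball {s : Set E} {x : E} {l : Filter ℝ≥0∞}
    (h : Tendsto (fun r => μ (s ∩ ball x r) / μ (ball x r)) (𝓝[>] 0) l) :
    Tendsto (fun r => μ (s ∩ closedBall x r) / μ (closedBall x r)) (𝓝[>] 0) l := by
  refine h.congr' ?_
  filter_upwards [self_mem_nhdsWithin] with r (hr : 0 < r)
  have hball := closedBall_ae_eq_ball_of_ne_zero μ x hr.ne'
  rw [measure_congr hball, measure_congr ((EventuallyEq.refl _ s).inter hball)]

theorem frequently_inter_smul_nonempty_of_density_one {s t : Set E} {x : E}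
    (h : Tendsto (fun r => μ (s ∩ ball x r) / μ (ball x r)) (𝓝[>] 0) (𝓝 1))
    (ht : MeasurableSet t) (h't : μ t ≠ 0) (h''t : μ t ≠ ∞) :
    ∃ᶠ r : ℝ in 𝓝[>] 0, (s ∩ ({x} + r • t)).Nonempty := by
  intro hempty
  have hzero : Tendsto (fun r : ℝ => μ (s ∩ ({x} + r • t)) / μ ({x} + r • t)) (𝓝[>] 0) (𝓝 0) :=
    tendsto_const_nhds.congr' <| hempty.mono fun r hr => by
      have hr' : s ∩ ({x} + r • t) = ∅ := not_nonempty_iff_eq_empty.mp hr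
      simp only [hr', measure_empty, ENNReal.zero_div]
  exact zero_ne_one <| tendsto_nhds_unique hzero <|
    Measure.tendsto_addHaar_inter_smul_one_of_density_one μ s x
      (tendsto_measure_inter_closedBall_div_of_ball h) t ht h't h''t

theorem sphere_subset_closure_normalize_of_density_one {s : Set E}
    (h : Tendsto (fun r => μ (s ∩ ball 0 r) / μ (ball 0 r)) (𝓝[>] 0) (𝓝 1)) {r : ℝ} (hr : 0 < r) :
    sphere (0 : E) 1 ⊆ closure (normalize '' ((s ∩ ball 0 r) \ {0})) := by
  intro u hu
  rw [_root_.mem_closure_iff]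
  intro U hU huU
  set t := directionCone U ∩ ball 0 1
  have hu1 : ‖u‖ = 1 := by simpa using hu
  have ht : IsOpen t := (isOpen_directionCone hU).inter isOpen_ball
  have hmid : (2⁻¹ : ℝ) • u ∈ t :=
    ⟨smul_mem_directionCone (mem_directionCone_of_norm_eq_one huU hu1) (by norm_num),
      by norm_num [norm_smul, hu1]⟩
  have hfin : μ t ≠ ∞ := (measure_mono inter_subset_right).trans_lt measure_ball_lt_top |>.ne
  obtain ⟨ρ, ⟨v, hvs, hv⟩, hρ, hρr⟩ :=
    ((frequently_inter_smul_nonempty_of_density_one h ht.measurableSet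
      (ht.measure_pos μ ⟨_, hmid⟩).ne' hfin).and_eventually
      (Ioo_mem_nhdsGT hr)).exists
  rw [singleton_zero, zero_add] at hv
  obtain ⟨w, ⟨hwU, hw1⟩, rfl⟩ := hv
  have hv : ρ • w ∈ directionCone U := smul_mem_directionCone hwU hρ
  have hvr : ρ • w ∈ ball (0 : E) r := by
    refine ball_subset_ball hρr.le ?_
    rw [← smul_unitBall_of_pos hρ]
    exact smul_mem_smul_set hw1
  exact ⟨_, hv.2, ρ • w, ⟨⟨hvs, hvr⟩, hv.1⟩, rfl⟩

end Density

theorem directions_of_density_point_dense_general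
    (n : ℕ)
    (V : Set (EuclideanSpace ℝ (Fin n)))
    (hdensity : Filter.Tendsto
      (fun r : ℝ => volume (V ∩ Metric.ball (0 : EuclideanSpace ℝ (Fin n)) r) /
        volume (Metric.ball (0 : EuclideanSpace ℝ (Fin n)) r))
      (nhdsWithin 0 (Set.Ioi 0)) (nhds 1)) :
    ∀ r : ℝ, 0 < r →
      Metric.sphere (0 : EuclideanSpace ℝ (Fin n)) 1 ⊆
        closure ((fun v => ‖v‖⁻¹ • v) ''
          ((V ∩ Metric.ball (0 : EuclideanSpace ℝ (Fin n)) r) \ {0})) :=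
  fun _ hr => sphere_subset_closure_normalize_of_density_one hdensity hr

/-- The density-point argument inside the proof of Lemma 3.27: if `0` is a Lebesgue
density point of a measurable set `V ⊆ ℝⁿ` (`n ≥ 1`), then for every `r > 0` the set of
normalized directions `v/‖v‖` of nonzero points `v ∈ V ∩ B(0,r)` is dense in the unit
sphere. -/
theorem directions_of_density_point_dense
    (n : ℕ) (hn : 1 ≤ n)
    (V : Set (EuclideanSpace ℝ (Fin n))) (hV : MeasurableSet V)
    (hdensity : Filter.Tendsto
      (fun r : ℝ => volume (V ∩ Metric.ball (0 : EuclideanSpace ℝ (Fin n)) r) /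
        volume (Metric.ball (0 : EuclideanSpace ℝ (Fin n)) r))
      (nhdsWithin 0 (Set.Ioi 0)) (nhds 1)) :
    ∀ r : ℝ, 0 < r →
      Metric.sphere (0 : EuclideanSpace ℝ (Fin n)) 1 ⊆
        closure ((fun v => ‖v‖⁻¹ • v) ''
          ((V ∩ Metric.ball (0 : EuclideanSpace ℝ (Fin n)) r) \ {0})) :=
  directions_of_density_point_dense_general n V hdensity
end

section
/- Let d ≥ 1, R > 0, and let f : ℂᵈ → ℂ be analytic on the open ball B = B(0, R) ⊆ ℂᵈ. Suppose there is a nonempty open set U ⊆ ℂᵈ such that for every v ∈ U there exists ε > 0 with the property that for all t ∈ ℂ with |t| < ε one has t·v ∈ B and f(t·v) = 0. Then f vanishes identically on B. -/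
/-!
By the one-variable identity theorem, `f` vanishes on the whole chord `ℂ • v ∩ B` for every
direction `v ∈ U`, because it vanishes near `0` on it. For a small `c ≠ 0` with `c • U` meeting
`B`, `f` therefore vanishes on the open set `c • U ∩ B`, and the identity theorem on the
connected ball `B` finishes the proof.
-/

open Filter Topology

section

variable {E F : Type*} [NormedAddCommGroup E] [NormedSpace ℂ E] {s : Set E}

theorem AnalyticOnNhd.apply_smul_eq_zero_of_eventually [NormedAddCommGroup F]
    [NormedSpace ℂ F] {f : E → F} (hf : AnalyticOnNhd ℂ f s) (hs : Convex ℝ s) {v : E}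
    (hv : ∀ᶠ t in 𝓝 (0 : ℂ), t • v ∈ s ∧ f (t • v) = 0) {t : ℂ} (ht : t • v ∈ s) :
    f (t • v) = 0 := by
  let line : ℂ →L[ℂ] E := ContinuousLinearMap.toSpanSingleton ℂ v
  have hline : AnalyticOnNhd ℂ (f ∘ line) (line ⁻¹' s) :=
    hf.comp (line.analyticOnNhd _) fun _ h ↦ h
  have hconv : Convex ℝ (line ⁻¹' s) := hs.linear_preimage (line.toLinearMap.restrictScalars ℝ)
  exact hline.eqOn_zero_of_preconnected_of_eventuallyEq_zero hconv.isPreconnected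
    hv.self_of_nhds.1 (hv.mono fun _ h ↦ h.2) ht

theorem eventuallyEq_zero_of_forall_smul_mem [Zero F] {f : E → F} {U : Set E} (hU : IsOpen U)
    (hs : IsOpen s) {c : ℂ} (hc : c ≠ 0) (h : ∀ u ∈ U, c • u ∈ s → f (c • u) = 0) {v : E}
    (hv : v ∈ U) (hcv : c • v ∈ s) : f =ᶠ[𝓝 (c • v)] 0 := by
  filter_upwards [hs.inter (hU.smul₀ hc) |>.mem_nhds ⟨hcv, Set.smul_mem_smul_set hv⟩]
  rintro _ ⟨hws, u, hu, rfl⟩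
  exact h u hu hws

end

theorem analytic_vanishing_on_cone_of_directions_general
    (d : ℕ) (R : ℝ)
    (f : EuclideanSpace ℂ (Fin d) → ℂ)
    (hf : AnalyticOnNhd ℂ f (Metric.ball (0 : EuclideanSpace ℂ (Fin d)) R))
    (U : Set (EuclideanSpace ℂ (Fin d))) (hU : IsOpen U) (hUne : U.Nonempty)
    (hvan : ∀ v ∈ U, ∃ ε : ℝ, 0 < ε ∧ ∀ t : ℂ, ‖t‖ < ε →
      t • v ∈ Metric.ball (0 : EuclideanSpace ℂ (Fin d)) R ∧ f (t • v) = 0) :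
    ∀ x ∈ Metric.ball (0 : EuclideanSpace ℂ (Fin d)) R, f x = 0 := by
  have hnear : ∀ v ∈ U, ∀ᶠ t in 𝓝 (0 : ℂ),
      t • v ∈ Metric.ball (0 : EuclideanSpace ℂ (Fin d)) R ∧ f (t • v) = 0 := by
    intro v hv
    obtain ⟨ε, hε, hε'⟩ := hvan v hv
    exact Metric.eventually_nhds_iff.2 ⟨ε, hε, fun t ht ↦ hε' t (by simpa using ht)⟩
  have hlines : ∀ v ∈ U, ∀ t : ℂ, t • v ∈ Metric.ball 0 R → f (t • v) = 0 :=
    fun v hv _ ↦ hf.apply_smul_eq_zero_of_eventually (convex_ball 0 R) (hnear v hv)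
  obtain ⟨v, hv⟩ := hUne
  obtain ⟨c, ⟨hcv, -⟩, hc⟩ := ((hnear v hv).filter_mono nhdsWithin_le_nhds).and
    (self_mem_nhdsWithin (s := {0}ᶜ)) |>.exists
  exact fun x hx ↦ hf.eqOn_zero_of_preconnected_of_eventuallyEq_zero
    (convex_ball 0 R).isPreconnected hcv
    (eventuallyEq_zero_of_forall_smul_mem hU Metric.isOpen_ball hc (hlines · · c) hv hcv) hx

/-- The analytic core of Lemma 3.83: let `f` be analytic on the ball `B = B(0,R) ⊆ ℂᵈ`
(`d ≥ 1`, `R > 0`). If there is a nonempty open set `U ⊆ ℂᵈ` of directions such that for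
every `v ∈ U` the function `f` vanishes on a short segment `{t·v : |t| < ε}` through the
origin, then `f` vanishes identically on `B`. -/
theorem analytic_vanishing_on_cone_of_directions
    (d : ℕ) (hd : 1 ≤ d) (R : ℝ) (hR : 0 < R)
    (f : EuclideanSpace ℂ (Fin d) → ℂ)
    (hf : AnalyticOnNhd ℂ f (Metric.ball (0 : EuclideanSpace ℂ (Fin d)) R))
    (U : Set (EuclideanSpace ℂ (Fin d))) (hU : IsOpen U) (hUne : U.Nonempty)
    (hvan : ∀ v ∈ U, ∃ ε : ℝ, 0 < ε ∧ ∀ t : ℂ, ‖t‖ < ε →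
      t • v ∈ Metric.ball (0 : EuclideanSpace ℂ (Fin d)) R ∧ f (t • v) = 0) :
    ∀ x ∈ Metric.ball (0 : EuclideanSpace ℂ (Fin d)) R, f x = 0 :=
  analytic_vanishing_on_cone_of_directions_general d R f hf U hU hUne hvan
end
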